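/- arXiv:2401.02934 — 3 statements merged into one kernel-verified Lean document; each statement's English description precedes it below -/
import Mathlib

section
/- Let G be a group and X ⊆ G a symmetric subset (closed under inverses) containing the identity. Suppose there exist elements g₁, ..., g_k ∈ G such that G is covered by the k left translates g₁X, ..., g_kX. Then every element of the subgroup generated by X is a product of at most 3k−2 elements of X, i.e. X^(3k−2) = ⟨X⟩. -/
/-!
Translate so that `g i₀ = 1`, and let `S j` be the set of indices `i` with `g i ∈ X ^ (3 * j)`.
If `x ∈ X ^ (m + 2)` lies in `g i • X`, then `g i ∈ X ^ (m + 3)`; so once the chain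
`S 0 ⊆ S 1 ⊆ ⋯` stalls at `S (j + 1) = S j`, taking `m = 3 * j` gives `X ^ (m + 2) ⊆ X ^ (m + 1)`,
after which the powers of `X` are constant and form a subgroup. As `S 0` is nonempty and there are
only `k` indices, the chain stalls at some `j ≤ k - 1`, i.e. `m + 1 ≤ 3 * k - 2`.
-/

open Pointwise

theorem Finset.exists_lt_card_succ_subset_of_monotone {α : Type*} [Fintype α]
    {s : ℕ → Finset α} (hs : Monotone s) (h₀ : (s 0).Nonempty) :
    ∃ j < Fintype.card α, s (j + 1) ⊆ s j := by
  by_contra! hgrow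
  have hcard : ∀ j ≤ Fintype.card α, j + 1 ≤ (s j).card := by
    intro j
    induction j with
    | zero => exact fun _ => h₀.card_pos
    | succ j ih =>
      intro hj
      have hlt : s j ⊂ s (j + 1) := ⟨hs j.le_succ, hgrow j hj⟩
      have := Finset.card_lt_card hlt
      have := ih (by omega)
      omega
  have := hcard _ le_rfl
  have := (s (Fintype.card α)).card_le_univ
  omega

namespace Set

variable {G : Type*} [Group G] {X : Set G}

theorem pow_eq_of_pow_succ_subset (hone : (1 : G) ∈ X) {n : ℕ} (h : X ^ (n + 1) ⊆ X ^ n)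
    {m : ℕ} (hnm : n ≤ m) : X ^ m = X ^ n := by
  induction m, hnm using Nat.le_induction with
  | base => rfl
  | succ m _ ih =>
    refine (pow_subset_pow_right hone (by omega)).antisymm' ?_
    calc X ^ (m + 1) = X ^ m * X := pow_succ X m
      _ = X ^ (n + 1) := by rw [ih, pow_succ]
      _ ⊆ X ^ n := h

theorem coe_closure_eq_pow_of_pow_succ_subset (hsym : X⁻¹ = X) (hone : (1 : G) ∈ X) {n : ℕ}
    (h : X ^ (n + 1) ⊆ X ^ n) : (Subgroup.closure X : Set G) = X ^ n := by
  refine (Subgroup.pow_subset Subgroup.subset_closure).antisymm' fun x hx => ?_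
  induction hx using Subgroup.closure_induction with
  | mem x hx =>
    exact h (pow_subset_pow_right hone (Nat.le_add_left 1 n) (by rwa [pow_one]))
  | one => exact one_mem_pow hone
  | mul x y _ _ hx hy =>
    rw [← pow_eq_of_pow_succ_subset hone h (Nat.le_add_left n n), pow_add]
    exact mul_mem_mul hx hy
  | inv x _ hx => rwa [← inv_mem_inv, ← inv_pow, hsym, inv_inv]

variable {ι : Type*} {g : ι → G}

theorem exists_mul_mem_smul_of_forall_mem_smul (hcov : ∀ x : G, ∃ i, x ∈ g i • X) (a : G) :
    ∀ x : G, ∃ i, x ∈ (a * g i) • X := fun x =>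
  (hcov (a⁻¹ * x)).imp fun _ hi => by
    rwa [mul_smul, mem_smul_set_iff_inv_smul_mem, smul_eq_mul]

theorem pow_succ_succ_subset_of_forall_mem_pow (hsym : X⁻¹ = X)
    (hcov : ∀ x : G, ∃ i, x ∈ g i • X) {m : ℕ} (hstab : ∀ i, g i ∈ X ^ (m + 3) → g i ∈ X ^ m) :
    X ^ (m + 2) ⊆ X ^ (m + 1) := by
  intro x hx
  obtain ⟨i, y, hy, rfl⟩ := hcov x
  have hgi : g i ∈ X ^ (m + 3) := by
    have hy' : y⁻¹ ∈ X := by rw [← hsym]; exact inv_mem_inv.mpr hy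
    simpa [pow_succ] using mul_mem_mul hx hy'
  rw [pow_succ]
  exact mul_mem_mul (hstab i hgi) hy

end Set

/-- Covering lemma: if a symmetric set `X` containing `1` has `k` left translates
covering `G`, then `X ^ (3 * k - 2)` equals the subgroup generated by `X`. -/
theorem stmt0 {G : Type*} [Group G] (X : Set G) (hsym : X⁻¹ = X) (hone : (1 : G) ∈ X)
    (k : ℕ) (g : Fin k → G) (hcov : ∀ x : G, ∃ i : Fin k, x ∈ g i • X) :
    X ^ (3 * k - 2) = (Subgroup.closure X : Set G) := by
  classical
  obtain ⟨i₀, -⟩ := hcov 1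
  set h : Fin k → G := fun i => (g i₀)⁻¹ * g i
  have hcov' : ∀ x : G, ∃ i, x ∈ h i • X := Set.exists_mul_mem_smul_of_forall_mem_smul hcov _
  set S : ℕ → Finset (Fin k) := fun j => {i | h i ∈ X ^ (3 * j)}
  have hS : Monotone S := fun a b hab i => by
    simpa [S] using fun hi => Set.pow_subset_pow_right hone (by omega) hi
  obtain ⟨j, hjk, hstall⟩ :=
    Finset.exists_lt_card_succ_subset_of_monotone hS ⟨i₀, by simp [S, h, Set.mem_one]⟩
  rw [Fintype.card_fin] at hjk
  have hstop : X ^ (3 * j + 2) ⊆ X ^ (3 * j + 1) :=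
    Set.pow_succ_succ_subset_of_forall_mem_pow hsym hcov' fun i hi => by
      simpa [S] using hstall (by simpa [S, mul_add] using hi)
  rw [Set.coe_closure_eq_pow_of_pow_succ_subset hsym hone hstop,
    Set.pow_eq_of_pow_succ_subset hone hstop (by omega)]
end

section
/- Let R be a Dedekind domain (or more specifically a localisation of the ring of integers of a number field) such that no quotient of R by a maximal ideal is isomorphic to the field with two elements. Then there exist elements t₁, t₂ ∈ R such that t₁² + t₁ and t₂² + t₂ generate the unit ideal of R. -/
/-!
Take any `t₁` with `t₁ (t₁ + 1) ≠ 0`; it exists because `R` itself is not `𝔽₂`. Only finitely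
many maximal ideals `𝔪` contain `t₁² + t₁`, and each residue field `R ⧸ 𝔪` has an element
other than `0` and `-1`. By the Chinese remainder theorem some `t₂` reduces to such an element
modulo every one of these `𝔪`, so no maximal ideal contains both `t₁² + t₁` and `t₂² + t₂`.
-/

open Ideal Function

theorem exists_sq_add_self_ne_zero {F : Type*} [CommRing F] [IsDomain F]
    (hF2 : ¬ Nonempty (F ≃+* ZMod 2)) : ∃ x : F, x ^ 2 + x ≠ 0 := by
  by_contra! h
  have hsurj : Surjective (fun b : Bool => if b then (0 : F) else -1) := by
    intro x
    rcases mul_eq_zero.mp (show x * (x + 1) = 0 by linear_combination h x) with hx | hx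
    · exact ⟨true, hx.symm⟩
    · exact ⟨false, (eq_neg_of_add_eq_zero_left hx).symm⟩
  have := Finite.of_surjective _ hsurj
  have := Fintype.ofFinite F
  have hcard : Fintype.card F = 2 :=
    le_antisymm (by simpa using Fintype.card_le_of_surjective _ hsurj) Fintype.one_lt_card
  exact hF2 ⟨(ZMod.ringEquivOfPrime F Nat.prime_two hcard).symm⟩

theorem exists_forall_sq_add_self_notMem {R : Type*} [CommRing R] {S : Set (Ideal R)}
    [Finite S] (hmax : ∀ 𝔪 ∈ S, 𝔪.IsMaximal)
    (hF2 : ∀ 𝔪 ∈ S, ¬ Nonempty ((R ⧸ 𝔪) ≃+* ZMod 2)) :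
    ∃ t : R, ∀ 𝔪 ∈ S, t ^ 2 + t ∉ 𝔪 := by
  have hc : ∀ 𝔪 : S, ∃ c : R, c ^ 2 + c ∉ (𝔪 : Ideal R) := by
    rintro ⟨𝔪, h𝔪⟩
    have := hmax 𝔪 h𝔪
    obtain ⟨x, hx⟩ := exists_sq_add_self_ne_zero (hF2 𝔪 h𝔪)
    obtain ⟨c, rfl⟩ := Ideal.Quotient.mk_surjective x
    exact ⟨c, by simpa [← Quotient.eq_zero_iff_mem] using hx⟩
  choose c hc using hc
  have hcoprime : Pairwise (IsCoprime on fun 𝔪 : S => (𝔪 : Ideal R)) := by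
    rintro ⟨𝔪, h𝔪⟩ ⟨𝔫, h𝔫⟩ hne
    have := hmax 𝔪 h𝔪
    have := hmax 𝔫 h𝔫
    exact isCoprime_of_isMaximal (Subtype.coe_injective.ne hne)
  obtain ⟨t, ht⟩ := exists_forall_sub_mem_ideal hcoprime c
  refine ⟨t, fun 𝔪 h𝔪 hmem => hc ⟨𝔪, h𝔪⟩ ?_⟩
  have hmod : Ideal.Quotient.mk 𝔪 t = Ideal.Quotient.mk 𝔪 (c ⟨𝔪, h𝔪⟩) :=
    Ideal.Quotient.eq.mpr (ht ⟨𝔪, h𝔪⟩)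
  simpa [← Quotient.eq_zero_iff_mem, hmod] using hmem

theorem IsDedekindDomain.finite_setOf_isMaximal_mem {R : Type*} [CommRing R]
    [IsDedekindDomain R] {s : R} (hs : s ≠ 0) :
    {𝔪 : Ideal R | 𝔪.IsMaximal ∧ s ∈ 𝔪}.Finite := by
  refine ((finite_factors (I := span {s}) (by simpa using hs)).image
    IsDedekindDomain.HeightOneSpectrum.asIdeal).subset ?_
  rintro 𝔪 ⟨hmax, hmem⟩
  have hne : 𝔪 ≠ ⊥ := fun h => hs (by simpa [h] using hmem)
  exact ⟨⟨𝔪, hmax.isPrime, hne⟩,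
    by simpa [dvd_iff_le, span_singleton_le_iff_mem] using hmem, rfl⟩

theorem IsDedekindDomain.exists_span_pair_sq_add_self_eq_top {R : Type*} [CommRing R]
    [IsDedekindDomain R] {s : R} (hs : s ≠ 0)
    (hF2 : ∀ 𝔪 : Ideal R, 𝔪.IsMaximal → ¬ Nonempty ((R ⧸ 𝔪) ≃+* ZMod 2)) :
    ∃ t : R, span {s, t ^ 2 + t} = ⊤ := by
  have hfin := (finite_setOf_isMaximal_mem hs).to_subtype
  obtain ⟨t, ht⟩ := exists_forall_sq_add_self_notMem
    (S := {𝔪 | 𝔪.IsMaximal ∧ s ∈ 𝔪}) (fun _ h𝔪 => h𝔪.1) fun 𝔪 h𝔪 => hF2 𝔪 h𝔪.1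
  refine ⟨t, by_contra fun hne => ?_⟩
  obtain ⟨𝔪, hmax, hle⟩ := exists_le_maximal _ hne
  exact ht 𝔪 ⟨hmax, hle (subset_span (by simp))⟩ (hle (subset_span (by simp)))

theorem stmt2_general {R : Type*} [CommRing R] [IsDedekindDomain R]
    (hF2 : ∀ 𝔪 : Ideal R, 𝔪.IsMaximal → ¬ Nonempty ((R ⧸ 𝔪) ≃+* ZMod 2)) :
    ∃ t₁ t₂ : R, Ideal.span {t₁ ^ 2 + t₁, t₂ ^ 2 + t₂} = ⊤ := by
  have hR : ¬ Nonempty (R ≃+* ZMod 2) := fun ⟨e⟩ =>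
    have := Ring.isField_iff_maximal_bot.mp (e.toMulEquiv.isField (Field.toIsField (ZMod 2)))
    hF2 ⊥ this ⟨(RingEquiv.quotientBot R).trans e⟩
  obtain ⟨t₁, ht₁⟩ := exists_sq_add_self_ne_zero hR
  obtain ⟨t₂, ht₂⟩ := IsDedekindDomain.exists_span_pair_sq_add_self_eq_top ht₁ hF2
  exact ⟨t₁, t₂, ht₂⟩

/-- In a Dedekind domain (not a field) with all residue fields finite and none
isomorphic to `𝔽₂`, there are `t₁`, `t₂` with `t₁² + t₁` and `t₂² + t₂`
generating the unit ideal. -/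
theorem stmt2 {R : Type*} [CommRing R] [IsDomain R] [IsDedekindDomain R]
    (hnf : ¬ IsField R)
    (hfin : ∀ 𝔪 : Ideal R, 𝔪.IsMaximal → Finite (R ⧸ 𝔪))
    (hF2 : ∀ 𝔪 : Ideal R, 𝔪.IsMaximal → ¬ Nonempty ((R ⧸ 𝔪) ≃+* ZMod 2)) :
    ∃ t₁ t₂ : R, Ideal.span {t₁ ^ 2 + t₁, t₂ ^ 2 + t₂} = ⊤ :=
  stmt2_general hF2
end

section
/- Let (G_i)_{i∈ι} be a family of groups and G = ∏_i G_i their direct product. Let w be a word (an element of a free group on k generators). If for every i the width of w in G_i is at most C (i.e. ⟨w(G_i)⟩ = w(G_i)^C, where w(G_i) is the symmetric set of w-values), then the width of w in G is at most 2C. -/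
/-!
The positive `w`-values `P` of a group contain `1` and are invariant under conjugation, so in a
product of `C` elements of `P ∪ P⁻¹` each positive factor can be moved to the left past the
inverse ones (being conjugated on the way): the product lies in `P ^ C * (P⁻¹) ^ C`. Do this in
every coordinate of an element of the subgroup generated by the `w`-values of `Π i, G i`. As
`w`-values are computed coordinatewise, the coordinatewise products of the positive parts and of
the inverse parts lie in `P ^ C` and `(P⁻¹) ^ C` for the product group.
-/

open Pointwise

/-- The symmetric set of `w`-values in a group `H`. -/
def wordValues {kk : ℕ} (w : FreeGroup (Fin kk)) (H : Type*) [Group H] : Set H :=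
  {x | ∃ h : Fin kk → H, FreeGroup.lift h w = x ∨ FreeGroup.lift h w = x⁻¹}

namespace Set

variable {ι : Type*} {G : ι → Type*}

lemma univ_pi_mul_subset [∀ i, Mul (G i)] (s t : ∀ i, Set (G i)) :
    univ.pi (s * t) ⊆ univ.pi s * univ.pi t := by
  intro x hx
  choose a ha b hb hab using fun i => hx i (mem_univ i)
  exact ⟨a, fun i _ => ha i, b, fun i _ => hb i, funext hab⟩

lemma univ_pi_pow_subset [∀ i, Monoid (G i)] (s : ∀ i, Set (G i)) (n : ℕ) :
    univ.pi (s ^ n) ⊆ univ.pi s ^ n := by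
  induction n with
  | zero =>
    rw [pow_zero, pow_zero]
    exact fun x hx => funext fun i => hx i (mem_univ i)
  | succ n ih =>
    rw [pow_succ, pow_succ]
    exact (univ_pi_mul_subset _ _).trans (mul_subset_mul_right ih)

lemma univ_pi_inv [∀ i, Inv (G i)] (s : ∀ i, Set (G i)) : univ.pi s⁻¹ = (univ.pi s)⁻¹ := rfl

lemma union_inv_pow_subset_pow_mul_inv_pow {H : Type*} [Group H] {s : Set H} (hs₁ : 1 ∈ s)
    (hs : ∀ g, ∀ x ∈ s, g * x * g⁻¹ ∈ s) (n : ℕ) : (s ∪ s⁻¹) ^ n ⊆ s ^ n * s⁻¹ ^ n := by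
  induction n with
  | zero => simp
  | succ n ih =>
    rw [pow_succ]
    intro y hy
    obtain ⟨_, hpq, x, hx, rfl⟩ := mem_mul.1 hy
    obtain ⟨p, hp, q, hq, rfl⟩ := mem_mul.1 (ih hpq)
    rcases hx with hx | hx
    · rw [show p * q * x = p * (q * x * q⁻¹) * q by group, pow_succ]
      exact mul_mem_mul (mul_mem_mul hp (hs q x hx))
        (pow_subset_pow_right (by simpa using hs₁) n.le_succ hq)
    · rw [mul_assoc, pow_succ s⁻¹]
      exact mul_mem_mul (pow_subset_pow_right hs₁ n.le_succ hp) (mul_mem_mul hq hx)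

end Set

lemma FreeGroup.lift_comp_apply {α H K : Type*} [Group H] [Group K] (f : H →* K) (h : α → H)
    (w : FreeGroup α) : FreeGroup.lift (f ∘ h) w = f (FreeGroup.lift h w) :=
  (FreeGroup.lift_unique (f.comp (FreeGroup.lift h)) (by simp)).symm

def positiveWordValues {kk : ℕ} (w : FreeGroup (Fin kk)) (H : Type*) [Group H] : Set H :=
  Set.range fun h : Fin kk → H => FreeGroup.lift h w

section WordValues

variable {kk : ℕ} {w : FreeGroup (Fin kk)} {H K : Type*} [Group H] [Group K]

lemma wordValues_eq_union :
    wordValues w H = positiveWordValues w H ∪ (positiveWordValues w H)⁻¹ := by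
  ext x
  simp [wordValues, positiveWordValues, exists_or]

lemma positiveWordValues_subset_wordValues : positiveWordValues w H ⊆ wordValues w H :=
  (wordValues_eq_union (w := w) (H := H)).symm ▸ Set.subset_union_left

lemma inv_positiveWordValues_subset_wordValues : (positiveWordValues w H)⁻¹ ⊆ wordValues w H :=
  (wordValues_eq_union (w := w) (H := H)).symm ▸ Set.subset_union_right

lemma map_mem_positiveWordValues (f : H →* K) {x : H} (hx : x ∈ positiveWordValues w H) :
    f x ∈ positiveWordValues w K := by
  obtain ⟨h, rfl⟩ := hx
  exact ⟨f ∘ h, FreeGroup.lift_comp_apply f h w⟩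

lemma one_mem_positiveWordValues : (1 : H) ∈ positiveWordValues w H :=
  ⟨1, (FreeGroup.lift_unique 1 fun _ => rfl).symm⟩

lemma image_wordValues_subset (f : H →* K) : f '' wordValues w H ⊆ wordValues w K := by
  rw [wordValues_eq_union, wordValues_eq_union, Set.image_union, Set.image_inv]
  exact Set.union_subset_union (Set.image_subset_iff.2 fun _ => map_mem_positiveWordValues f)
    (Set.inv_subset_inv.2 (Set.image_subset_iff.2 fun _ => map_mem_positiveWordValues f))

lemma map_closure_wordValues_le (f : H →* K) :
    (Subgroup.closure (wordValues w H)).map f ≤ Subgroup.closure (wordValues w K) := by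
  rw [MonoidHom.map_closure]
  exact Subgroup.closure_mono (image_wordValues_subset f)

lemma wordValues_pow_subset (n : ℕ) :
    wordValues w H ^ n ⊆ positiveWordValues w H ^ n * (positiveWordValues w H)⁻¹ ^ n := by
  rw [wordValues_eq_union]
  exact Set.union_inv_pow_subset_pow_mul_inv_pow one_mem_positiveWordValues
    (fun g _ hx => map_mem_positiveWordValues (MulAut.conj g).toMonoidHom hx) n

lemma univ_pi_positiveWordValues_subset {ι : Type*} (G : ι → Type*) [∀ i, Group (G i)] :
    Set.univ.pi (fun i => positiveWordValues w (G i)) ⊆ positiveWordValues w (∀ i, G i) := by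
  intro x hx
  choose h hh using fun i => hx i (Set.mem_univ i)
  exact ⟨fun j i => h i j, funext fun i =>
    (FreeGroup.lift_comp_apply (Pi.evalMonoidHom G i) _ w).symm.trans (hh i)⟩

end WordValues

/-- If a word `w` has width at most `C` in every group `G i`, then it has width at
most `2 * C` in the direct product `Π i, G i`. -/
theorem stmt4 {ι : Type*} (G : ι → Type*) [∀ i, Group (G i)] {kk : ℕ}
    (w : FreeGroup (Fin kk)) (C : ℕ)
    (hwidth : ∀ i, (wordValues w (G i)) ^ C = (Subgroup.closure (wordValues w (G i)) : Set (G i))) :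
    (wordValues w (∀ i, G i)) ^ (2 * C) =
      (Subgroup.closure (wordValues w (∀ i, G i)) : Set (∀ i, G i)) := by
  refine (Subgroup.pow_subset Subgroup.subset_closure).antisymm fun x hx => ?_
  set P : ∀ i, Set (G i) := fun i => positiveWordValues w (G i)
  have hPpi := univ_pi_positiveWordValues_subset (w := w) G
  have hx_pi : x ∈ Set.univ.pi (P ^ C * P⁻¹ ^ C) := fun i _ =>
    wordValues_pow_subset C <| (hwidth i).symm ▸
      map_closure_wordValues_le (Pi.evalMonoidHom G i) ⟨x, hx, rfl⟩
  have hP : Set.univ.pi (P ^ C) ⊆ wordValues w (∀ i, G i) ^ C :=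
    (Set.univ_pi_pow_subset P C).trans <| Set.pow_subset_pow_left <|
      hPpi.trans positiveWordValues_subset_wordValues
  have hPinv : Set.univ.pi (P⁻¹ ^ C) ⊆ wordValues w (∀ i, G i) ^ C :=
    (Set.univ_pi_pow_subset P⁻¹ C).trans <| Set.pow_subset_pow_left <|
      (Set.univ_pi_inv P).trans_subset <|
        (Set.inv_subset_inv.2 hPpi).trans inv_positiveWordValues_subset_wordValues
  rw [two_mul, pow_add]
  exact Set.mul_subset_mul hP hPinv (Set.univ_pi_mul_subset _ _ hx_pi)
end
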